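/- Let n₁, n₂ be positive integers, α > 0, and X ∈ ℝ^{n₁×n₂} with ‖X‖_max ≤ α. Let (I, J) be a random index pair uniformly distributed on {1,…,n₁}×{1,…,n₂} and let τ be uniformly distributed on [−α, α], with (I, J) and τ independent. Then E[ | X_{I,J} − α·sgn(X_{I,J} − τ) | ] = α − ‖X‖_F² / (α n₁ n₂). -/

import Mathlib

/-!
Dithering is unbiased: for `|x| ≤ α` and `τ` uniform on `[-α, α]`, `E[α sgn (x - τ)] = x`. Since
`|x| ≤ α`, the distortion `|x - α sgn (x - τ)|` equals `α - x sgn (x - τ)` pointwise, so its mean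
over the dither is `α - x² / α`. Independence of the index and the dither lets us integrate over
`τ` first for each fixed entry; averaging `α - X_{ij}² / α` over the uniform entry then gives
`α - ‖X‖_F² / (α n₁ n₂)`.
-/

open MeasureTheory ProbabilityTheory

/-- The sign function: `+1` if `t ≥ 0` and `-1` if `t < 0`. -/
noncomputable def sgn (t : ℝ) : ℝ := if 0 ≤ t then 1 else -1

/-- Frobenius norm of a real matrix. -/
noncomputable def frobR {n₁ n₂ : ℕ} (A : Matrix (Fin n₁) (Fin n₂) ℝ) : ℝ :=
  Real.sqrt (∑ i, ∑ j, (A i j) ^ 2)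

@[fun_prop]
lemma measurable_sgn : Measurable sgn :=
  Measurable.ite measurableSet_Ici measurable_const measurable_const

lemma abs_sgn_le (t : ℝ) : |sgn t| ≤ 1 := by
  unfold sgn; split <;> simp

lemma abs_sub_mul_sgn_sub {x α : ℝ} (hx : |x| ≤ α) (t : ℝ) :
    |x - α * sgn (x - t)| = α - x * sgn (x - t) := by
  obtain ⟨hx₁, hx₂⟩ := abs_le.mp hx
  unfold sgn
  split
  · rw [abs_of_nonpos (by linarith)]; ring
  · rw [abs_of_nonneg (by linarith)]; ring

lemma abs_sub_mul_sgn_sub_le {x α : ℝ} (hx : |x| ≤ α) (t : ℝ) :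
    |x - α * sgn (x - t)| ≤ 2 * α := by
  rw [abs_sub_mul_sgn_sub hx]
  nlinarith [abs_le.mp hx, abs_le.mp (abs_sgn_le (x - t))]

lemma setIntegral_Icc_sgn_sub {a b x : ℝ} (hax : a ≤ x) (hxb : x ≤ b) :
    ∫ t in Set.Icc a b, sgn (x - t) = (x - a) - (b - x) := by
  have hleft : Set.EqOn (fun t => sgn (x - t)) (fun _ => 1) (Set.Ioc a x) :=
    fun t ht => if_pos (sub_nonneg.mpr ht.2)
  have hright : Set.EqOn (fun t => sgn (x - t)) (fun _ => -1) (Set.Ioc x b) :=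
    fun t ht => if_neg (not_le.mpr (sub_neg.mpr ht.1))
  rw [integral_Icc_eq_integral_Ioc, ← Set.Ioc_union_Ioc_eq_Ioc hax hxb,
    setIntegral_union (Set.Ioc_disjoint_Ioc_of_le le_rfl) measurableSet_Ioc
      ((integrableOn_const measure_Ioc_lt_top.ne).congr_fun hleft.symm measurableSet_Ioc)
      ((integrableOn_const measure_Ioc_lt_top.ne).congr_fun hright.symm measurableSet_Ioc),
    setIntegral_congr_fun measurableSet_Ioc hleft, setIntegral_congr_fun measurableSet_Ioc hright,
    setIntegral_const, setIntegral_const, Real.volume_real_Ioc_of_le hax,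
    Real.volume_real_Ioc_of_le hxb]
  simp only [smul_eq_mul]
  ring

lemma integral_abs_sub_mul_sgn_uniform {α x : ℝ} (hα : 0 < α) (hx : |x| ≤ α) :
    ∫ t, |x - α * sgn (x - t)|
      ∂(ENNReal.ofReal (1 / (2 * α)) • volume.restrict (Set.Icc (-α) α)) = α - x ^ 2 / α := by
  obtain ⟨hx₁, hx₂⟩ := abs_le.mp hx
  have hsgn : IntegrableOn (fun t => sgn (x - t)) (Set.Icc (-α) α) :=
    Integrable.of_bound (by fun_prop : Measurable _).aestronglyMeasurable 1
      (.of_forall fun t => abs_sgn_le _)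
  rw [integral_smul_measure, integral_congr_ae (.of_forall (abs_sub_mul_sgn_sub hx)),
    integral_sub (integrable_const α) (hsgn.const_mul x), integral_const_mul,
    setIntegral_Icc_sgn_sub hx₁ hx₂, setIntegral_const, Real.volume_real_Icc_of_le (by linarith),
    ENNReal.toReal_ofReal (by positivity)]
  simp only [smul_eq_mul]
  field_simp
  ring

theorem ProbabilityTheory.IndepFun.integral_comp_eq_integral_integral {Ω α β : Type*}
    [MeasurableSpace Ω] [MeasurableSpace α] [MeasurableSpace β] {μ : Measure Ω} [IsFiniteMeasure μ]
    {X : Ω → α} {Y : Ω → β} (hXY : IndepFun X Y μ) (hX : AEMeasurable X μ) (hY : AEMeasurable Y μ)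
    {F : α × β → ℝ} (hF : Integrable F ((μ.map X).prod (μ.map Y))) :
    ∫ ω, F (X ω, Y ω) ∂μ = ∫ a, ∫ b, F (a, b) ∂(μ.map Y) ∂(μ.map X) := by
  have hmap := hXY.map_prod_eq_prod_map_map hX hY
  rw [← integral_prod F hF, ← hmap]
  rw [← hmap] at hF
  exact (integral_map (hX.prodMk hY) hF.aestronglyMeasurable).symm

theorem integral_eq_sum_div_card_of_measure_singleton_eq {ι : Type*} [Fintype ι]
    [MeasurableSpace ι] [MeasurableSingletonClass ι] (μ : Measure ι) [IsProbabilityMeasure μ]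
    {c : ENNReal} (hμ : ∀ p, μ {p} = c) (g : ι → ℝ) :
    ∫ p, g p ∂μ = (∑ p, g p) / Fintype.card ι := by
  have hreal : ∀ p, μ.real {p} = c.toReal := fun p => by rw [measureReal_def, hμ]
  have hcard : Fintype.card ι * c.toReal = 1 := by
    simpa [hreal] using sum_measureReal_singleton (μ := μ) Finset.univ
  rw [integral_fintype Integrable.of_finite]
  simp only [hreal, smul_eq_mul, ← Finset.mul_sum]
  rw [eq_div_iff (left_ne_zero_of_mul_eq_one hcard), mul_comm, ← mul_assoc, hcard, one_mul]

lemma frobR_sq {n₁ n₂ : ℕ} (A : Matrix (Fin n₁) (Fin n₂) ℝ) :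
    frobR A ^ 2 = ∑ i, ∑ j, A i j ^ 2 :=
  Real.sq_sqrt (by positivity)

theorem expected_distortion_general (n₁ n₂ : ℕ)
    (α : ℝ) (hα : 0 < α)
    (X : Matrix (Fin n₁) (Fin n₂) ℝ) (hX : ∀ i j, |X i j| ≤ α)
    {Ω : Type*} [MeasureSpace Ω] [IsProbabilityMeasure (ℙ : Measure Ω)]
    (IJ : Ω → Fin n₁ × Fin n₂) (τ : Ω → ℝ)
    (hIJmeas : Measurable IJ) (hτmeas : Measurable τ)
    -- (I, J) is uniform on {1,…,n₁}×{1,…,n₂}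
    (hIJunif : ∀ p, ℙ (IJ ⁻¹' {p}) = ((n₁ * n₂ : ENNReal))⁻¹)
    -- τ is uniform on [-α, α]
    (hτunif : Measure.map τ ℙ =
      ENNReal.ofReal (1 / (2 * α)) • (volume.restrict (Set.Icc (-α) α)))
    -- (I, J) and τ are independent
    (hindep : IndepFun IJ τ ℙ) :
    ∫ ω, |X (IJ ω).1 (IJ ω).2 - α * sgn (X (IJ ω).1 (IJ ω).2 - τ ω)| ∂ℙ
      = α - frobR X ^ 2 / (α * n₁ * n₂) := by
  have := Measure.isProbabilityMeasure_map (μ := ℙ) hIJmeas.aemeasurable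
  have := Measure.isProbabilityMeasure_map (μ := ℙ) hτmeas.aemeasurable
  have hbound : ∀ q : (Fin n₁ × Fin n₂) × ℝ,
      ‖|X q.1.1 q.1.2 - α * sgn (X q.1.1 q.1.2 - q.2)|‖ ≤ 2 * α := fun q => by
    simpa using abs_sub_mul_sgn_sub_le (hX q.1.1 q.1.2) q.2
  rw [hindep.integral_comp_eq_integral_integral hIJmeas.aemeasurable hτmeas.aemeasurable
      (F := fun q => |X q.1.1 q.1.2 - α * sgn (X q.1.1 q.1.2 - q.2)|)
      (.of_bound (by fun_prop : Measurable _).aestronglyMeasurable _ (.of_forall hbound))]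
  simp only [hτunif, integral_abs_sub_mul_sgn_uniform hα (hX _ _)]
  rw [integral_sub (integrable_const α) Integrable.of_finite, integral_const, probReal_univ,
    integral_div, integral_eq_sum_div_card_of_measure_singleton_eq _
      (fun p => by rw [Measure.map_apply hIJmeas (measurableSet_singleton p), hIJunif]),
    Fintype.sum_prod_type, frobR_sq]
  simp only [Fintype.card_prod, Fintype.card_fin, Nat.cast_mul]
  ring

/-- Expected distortion of a dithered one-bit sample over both the random dither and the
uniformly random sampled entry (equation (25) in the paper):
`E[|X_{I,J} - α·sgn(X_{I,J} - τ)|] = α - ‖X‖_F²/(α n₁ n₂)`. -/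
theorem expected_distortion (n₁ n₂ : ℕ) (hn₁ : 0 < n₁) (hn₂ : 0 < n₂)
    (α : ℝ) (hα : 0 < α)
    (X : Matrix (Fin n₁) (Fin n₂) ℝ) (hX : ∀ i j, |X i j| ≤ α)
    {Ω : Type*} [MeasureSpace Ω] [IsProbabilityMeasure (ℙ : Measure Ω)]
    (IJ : Ω → Fin n₁ × Fin n₂) (τ : Ω → ℝ)
    (hIJmeas : Measurable IJ) (hτmeas : Measurable τ)
    -- (I, J) is uniform on {1,…,n₁}×{1,…,n₂}
    (hIJunif : ∀ p, ℙ (IJ ⁻¹' {p}) = ((n₁ * n₂ : ENNReal))⁻¹)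
    -- τ is uniform on [-α, α]
    (hτunif : Measure.map τ ℙ =
      ENNReal.ofReal (1 / (2 * α)) • (volume.restrict (Set.Icc (-α) α)))
    -- (I, J) and τ are independent
    (hindep : IndepFun IJ τ ℙ) :
    ∫ ω, |X (IJ ω).1 (IJ ω).2 - α * sgn (X (IJ ω).1 (IJ ω).2 - τ ω)| ∂ℙ
      = α - frobR X ^ 2 / (α * n₁ * n₂) :=
  expected_distortion_general n₁ n₂ α hα X hX IJ τ hIJmeas hτmeas hIJunif hτunif hindep
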